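/- arXiv:2603.21645 — 2 statements merged into one kernel-verified Lean document; each statement's English description precedes it below -/
import Mathlib

section
/- There is an absolute constant C with the following property. Let Δ be a finite alphabet, let m ≥ 1, and let x : ℕ → Δ be a sequence generated by a Fibonacci-DFAO with at most m states. Then for every n ≥ 1, the number of distinct factors of length n of x — that is, the number of distinct tuples (x(i), x(i+1), …, x(i+n−1)) over all i ≥ 0 — is at most C·n·m². -/
/-- The Fibonacci (Zeckendorf) value of a binary word written msd-first:
`[x₁⋯x_ℓ] = Σ_j x_j · F_{ℓ−j+2}`. -/
def fibVal : List Bool → ℕ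
  | [] => 0
  | a :: rest => (if a then Nat.fib (rest.length + 2) else 0) + fibVal rest

/-- A binary word is a valid Fibonacci representation if it has no factor `11`. -/
def ValidFib (w : List Bool) : Prop :=
  w.Chain' (fun a b => a = false ∨ b = false)

/-- A deterministic finite automaton with output (DFAO). -/
structure DFAO (α : Type*) (σ : Type*) (Δ : Type*) where
  step : σ → α → σ
  start : σ
  out : σ → Δ

/-- The output of a DFAO on an input word. -/
def DFAO.eval {α σ Δ : Type*} (M : DFAO α σ Δ) (w : List α) : Δ :=
  M.out (w.foldl M.step M.start)

/-- `h : ℕ → Δ` is generated by a Fibonacci-DFAO with at most `m` states: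
there is a DFAO with input alphabet `{0,1}` and at most `m` states whose output on
every valid Fibonacci representation `w` (leading zeros allowed) is `h [w]`. -/
def FibGeneratedBy {Δ : Type*} (h : ℕ → Δ) (m : ℕ) : Prop :=
  ∃ (σ : Type) (_ : Fintype σ) (M : DFAO Bool σ Δ),
    Fintype.card σ ≤ m ∧ ∀ w : List Bool, ValidFib w → M.eval w = h (fibVal w)

open List Nat

/-!
Choose `ℓ` with `n ≤ F_ℓ` and `F_{ℓ+2} ≤ 5n`. Cutting the Zeckendorf representation of `i`
before its last `ℓ + 1` digits, or before its last `ℓ` digits when the former begin with `1`,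
writes `i = [u 0^L] + r` with `u` valid, `L ∈ {ℓ, ℓ+1}` and `r < F_{L+1}`. For
`j < n` we have `r + j < F_{L+2}`, so `u · rep_L(r + j)` is a valid representation of `i + j`,
unless `u` ends in `1` and `r + j ≥ F_{L+1}`. In that case a Fibonacci carry gives a valid `B`
with `[B 0^{L+1}] = [u 0^L] + F_{L+1}`, and `B · rep_{L+1}(r + j - F_{L+1})` represents `i + j`.
Hence the factor at `i` is determined by `L`, `r`, whether `u` ends in `1`, and the states
reached after reading `u` and `B`: at most `2 · 2 · F_{ℓ+2} · m² ≤ 20 n m²` possibilities.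
-/

theorem fibVal_replicate_false (L : ℕ) : fibVal (replicate L false) = 0 := by
  induction L with
  | zero => rfl
  | succ L ih => simp [replicate_succ, fibVal, ih]

theorem fibVal_append (u v : List Bool) :
    fibVal (u ++ v) = fibVal (u ++ replicate v.length false) + fibVal v := by
  induction u with
  | nil => simp [fibVal_replicate_false]
  | cons a u ih => simp only [cons_append, fibVal, length_append, length_replicate, ih]; omega

@[simp] theorem fibVal_cons_false (v : List Bool) : fibVal (false :: v) = fibVal v := by
  simp [fibVal]

@[simp] theorem fibVal_cons_true (v : List Bool) :
    fibVal (true :: v) = fib (v.length + 2) + fibVal v := by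
  simp [fibVal]

theorem fibVal_lt_fib : ∀ v : List Bool, ValidFib v → fibVal v < fib (v.length + 2)
  | [], _ => by simp [fibVal]
  | false :: t, hv => by
    rw [fibVal_cons_false]
    exact (fibVal_lt_fib t hv.tail).trans_le (fib_mono (by simp))
  | [true], _ => by simp [fibVal, fib_add_two]
  | true :: false :: t, hv => by
    have := fibVal_lt_fib t hv.tail.tail
    have : fib (t.length + 4) = fib (t.length + 2) + fib (t.length + 3) := fib_add_two
    rw [fibVal_cons_true, fibVal_cons_false]
    show fib (t.length + 3) + fibVal t < fib (t.length + 4)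
    omega
  | true :: true :: _, hv => by simpa using (isChain_cons_cons.mp hv).1

def fibRep : ℕ → ℕ → List Bool
  | 0, _ => []
  | L + 1, s =>
    if fib (L + 2) ≤ s then true :: fibRep L (s - fib (L + 2)) else false :: fibRep L s

theorem length_fibRep : ∀ L s, (fibRep L s).length = L
  | 0, _ => rfl
  | L + 1, s => by by_cases h : fib (L + 2) ≤ s <;> simp [fibRep, h, length_fibRep L]

theorem fibRep_succ_of_lt {L s : ℕ} (h : s < fib (L + 2)) :
    fibRep (L + 1) s = false :: fibRep L s := by
  simp [fibRep, Nat.not_le.mpr h]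

theorem fibVal_fibRep : ∀ L s, s < fib (L + 2) → fibVal (fibRep L s) = s
  | 0, s, hs => by simp at hs; simp [fibRep, fibVal, hs]
  | L + 1, s, hs => by
    replace hs : s < fib (L + 3) := hs
    have : fib (L + 3) = fib (L + 1) + fib (L + 2) := fib_add_two
    have : fib (L + 1) ≤ fib (L + 2) := fib_le_fib_succ
    by_cases h : fib (L + 2) ≤ s
    · simp only [fibRep, if_pos h, fibVal, length_fibRep, if_true]
      rw [fibVal_fibRep L _ (by omega)]; omega
    · simp only [fibRep, if_neg h, fibVal, length_fibRep, Bool.false_eq_true, if_false]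
      rw [fibVal_fibRep L _ (by omega)]; simp

theorem validFib_fibRep : ∀ L s, s < fib (L + 2) → ValidFib (fibRep L s)
  | 0, _, _ => isChain_nil
  | 1, s, _ => by rw [fibRep]; split <;> exact isChain_singleton _
  | L + 2, s, hs => by
    replace hs : s < fib (L + 4) := hs
    have : fib (L + 4) = fib (L + 2) + fib (L + 3) := fib_add_two
    have : fib (L + 3) = fib (L + 1) + fib (L + 2) := fib_add_two
    have : fib (L + 1) ≤ fib (L + 2) := fib_le_fib_succ
    by_cases h : fib (L + 3) ≤ s
    · have hs' : s - fib (L + 3) < fib (L + 2) := by omega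
      have hv := validFib_fibRep (L + 1) _ (by omega : s - fib (L + 3) < fib (L + 3))
      rw [fibRep_succ_of_lt hs'] at hv
      rw [fibRep, if_pos h, fibRep_succ_of_lt hs']
      exact hv.cons_cons (by simp)
    · rw [fibRep, if_neg h]
      exact (validFib_fibRep (L + 1) s (by show s < fib (L + 3); omega)).cons
        fun _ _ => Or.inl rfl

theorem validFib_append_fibRep {u : List Bool} {L s : ℕ} (hu : ValidFib u) (hs : s < fib (L + 2))
    (hcap : u.getLast? = some true → s < fib (L + 1)) : ValidFib (u ++ fibRep L s) := by
  refine isChain_append.mpr ⟨hu, validFib_fibRep L s hs, fun a ha b hb => ?_⟩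
  cases a
  · exact Or.inl rfl
  · obtain ⟨L, rfl⟩ : ∃ L', L = L' + 1 :=
      Nat.exists_eq_add_one_of_ne_zero (by rintro rfl; simp [fibRep] at hb)
    rw [fibRep_succ_of_lt (hcap ha)] at hb
    exact Or.inr (by simpa using hb.symm)

theorem fibVal_append_fibRep (u : List Bool) {L s : ℕ} (hs : s < fib (L + 2)) :
    fibVal (u ++ fibRep L s) = fibVal (u ++ replicate L false) + s := by
  rw [fibVal_append, length_fibRep, fibVal_fibRep L s hs]

theorem fibVal_lt_fib_of_validFib_true_cons {v : List Bool} (hv : ValidFib (true :: v)) :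
    fibVal v < fib (v.length + 1) := by
  match v, hv with
  | [], _ => simp [fibVal]
  | false :: t, hv => simpa using fibVal_lt_fib t hv.tail.tail
  | true :: _, hv => simpa using (isChain_cons_cons.mp hv).1

theorem exists_carry (u : List Bool) (hu : ValidFib u) (hlast : u.getLast? = some true) :
    ∃ B, ValidFib B ∧ ∀ L, fibVal (B ++ replicate (L + 1) false) =
      fibVal (u ++ replicate L false) + fib (L + 1) := by
  obtain ⟨u₀, rfl⟩ := getLast?_eq_some_iff.mp hlast
  rcases u₀.eq_nil_or_concat' with rfl | ⟨u₁, a, rfl⟩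
  · refine ⟨[true], isChain_singleton _, fun L => ?_⟩
    simp [fibVal_replicate_false, Nat.add_assoc, fib_add_two]
    omega
  obtain rfl : a = false := by
    simpa using (isChain_append.mp hu).2.2 a (by simp) true rfl
  by_cases hlast₁ : u₁.getLast? = some true
  · obtain ⟨u₂, rfl⟩ := getLast?_eq_some_iff.mp hlast₁
    obtain ⟨B, hB, hBval⟩ := exists_carry _ hu.left_of_append.left_of_append hlast₁
    refine ⟨B ++ [false, false], ?_, fun L => ?_⟩
    · exact isChain_append.mpr ⟨hB, by simp, fun _ _ _ _ => Or.inr (by simp_all)⟩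
    -- `[u₂ 1 0 1 0^L] + F_{L+1} = [u₂ 1 0^{L+2}] + F_{L+3}`: the carry moves two digits left.
    · rw [append_assoc, show [false, false] ++ replicate (L + 1) false = replicate (L + 3) false
        from rfl, hBval (L + 2)]
      simp only [append_assoc, cons_append, nil_append]
      rw [fibVal_append u₂ (true :: _), fibVal_append u₂ (true :: false :: _)]
      simp [fibVal_replicate_false, Nat.add_assoc, fib_add_two]
      omega
  · refine ⟨u₁ ++ [true], ?_, fun L => ?_⟩
    · refine isChain_append.mpr ⟨hu.left_of_append.left_of_append, isChain_singleton _, ?_⟩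
      rintro (_ | _) ha _ _
      · exact Or.inl rfl
      · exact absurd ha hlast₁
    · simp only [append_assoc, cons_append, nil_append]
      rw [fibVal_append u₁ (true :: _), fibVal_append u₁ (false :: _)]
      simp [fibVal_replicate_false, Nat.add_assoc, fib_add_two]
      omega
termination_by u.length

theorem exists_eq_fibVal_append_replicate_add (i ℓ : ℕ) :
    ∃ e : Fin 2, ∃ u, ValidFib u ∧ ∃ r < fib (ℓ + e + 1),
      i = fibVal (u ++ replicate (ℓ + e) false) + r := by
  set K := i + ℓ + 1
  have hiK : i < fib (K + 2) := by have := le_fib_add_one (K + 2); omega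
  have hw := validFib_fibRep K i hiK
  rw [← fibVal_fibRep K i hiK]
  obtain ⟨u, v, huv, hv⟩ : ∃ u v, fibRep K i = u ++ v ∧ v.length = ℓ + 1 :=
    ⟨_, _, (take_append_drop (K - (ℓ + 1)) _).symm, by simp [length_fibRep]; omega⟩
  rw [huv] at hw ⊢
  obtain ⟨hu, hv', -⟩ := isChain_append.mp hw
  match v, hv, hv', hw with
  | false :: t, hv, hv', _ =>
    have ht : t.length = ℓ := by simpa using hv
    refine ⟨1, u, hu, fibVal t, ?_, ?_⟩
    · simpa [ht] using fibVal_lt_fib t hv'.tail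
    · rw [fibVal_append, hv]; simp
  | true :: t, hv, hv', hw =>
    have ht : t.length = ℓ := by simpa using hv
    rw [← singleton_append, ← append_assoc] at hw ⊢
    refine ⟨0, u ++ [true], hw.left_of_append, fibVal t, ?_, ?_⟩
    · simpa [ht] using fibVal_lt_fib_of_validFib_true_cons hv'
    · rw [fibVal_append (u ++ [true]) t]
      simp [ht]

theorem ncard_factors_le_card {Δ P : Type*} [Fintype P] (x : ℕ → Δ) (n : ℕ)
    (D : P → Fin n → Δ) (hD : ∀ i, ∃ p, ∀ j : Fin n, D p j = x (i + j)) :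
    {f : Fin n → Δ | ∃ i : ℕ, ∀ j : Fin n, f j = x (i + j)}.ncard ≤ Fintype.card P := by
  have hsub : {f : Fin n → Δ | ∃ i : ℕ, ∀ j : Fin n, f j = x (i + j)} ⊆ Set.range D := by
    rintro f ⟨i, hf⟩
    obtain ⟨p, hp⟩ := hD i
    exact ⟨p, funext fun j => (hp j).trans (hf j).symm⟩
  calc _ ≤ (Set.range D).ncard := Set.ncard_le_ncard hsub (Set.finite_range D)
    _ ≤ Nat.card P := Finite.card_range_le D
    _ = Fintype.card P := Nat.card_eq_fintype_card

theorem exists_le_fib_and_fib_add_two_le {n : ℕ} (hn : 1 ≤ n) :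
    ∃ ℓ, n ≤ fib ℓ ∧ fib (ℓ + 2) ≤ 5 * n := by
  have hex : ∃ k, n ≤ fib k := ⟨n + 1, by have := le_fib_add_one (n + 1); omega⟩
  refine ⟨Nat.find hex, Nat.find_spec hex, ?_⟩
  match hk : Nat.find hex with
  | 0 => have := Nat.find_spec hex; rw [hk] at this; simp at this; omega
  | 1 => simp [fib_add_two]; omega
  | k + 2 =>
    have hlt : fib (k + 1) < n := not_le.mp (Nat.find_min hex (by omega))
    have : fib (k + 4) = fib (k + 2) + fib (k + 3) := fib_add_two
    have : fib (k + 3) = fib (k + 1) + fib (k + 2) := fib_add_two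
    have : fib (k + 2) = fib k + fib (k + 1) := fib_add_two
    have : fib k ≤ fib (k + 1) := fib_le_fib_succ
    show fib (k + 4) ≤ 5 * n
    omega

section Window

variable {Δ σ : Type*} (M : DFAO Bool σ Δ)

/-- The factor of length `n` at `[u 0^(ℓ+e)] + r`, given the states `q` and `q'` reached after
reading `u` and (if `carry`, i.e. `u` ends in `1`) the word `B` of `exists_carry`. -/
def windowDecoder (ℓ n : ℕ) : Fin 2 × Bool × Fin (fib (ℓ + 2)) × σ × σ → Fin n → Δ
  | (e, carry, r, q, q'), j =>
    if carry ∧ fib (ℓ + e + 1) ≤ r + j then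
      M.out ((fibRep (ℓ + e + 1) (r + j - fib (ℓ + e + 1))).foldl M.step q')
    else M.out ((fibRep (ℓ + e) (r + j)).foldl M.step q)

variable {M} {x : ℕ → Δ}

theorem apply_fibVal_append_replicate_add (hM : ∀ w, ValidFib w → M.eval w = x (fibVal w))
    {u : List Bool} {L s : ℕ} (hu : ValidFib u)
    (hs : s < fib (L + 2)) (hcap : u.getLast? = some true → s < fib (L + 1)) :
    x (fibVal (u ++ replicate L false) + s) =
      M.out ((fibRep L s).foldl M.step (u.foldl M.step M.start)) := by
  rw [← fibVal_append_fibRep u hs, ← hM _ (validFib_append_fibRep hu hs hcap), DFAO.eval,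
    foldl_append]

theorem exists_windowDecoder_eq (hM : ∀ w, ValidFib w → M.eval w = x (fibVal w))
    {ℓ n : ℕ} (hn : n ≤ fib ℓ) (i : ℕ) :
    ∃ p, ∀ j : Fin n, windowDecoder M ℓ n p j = x (i + j) := by
  obtain ⟨e, u, hu, r, hr, rfl⟩ := exists_eq_fibVal_append_replicate_add i ℓ
  set L := ℓ + (e : ℕ) with hL
  obtain ⟨B, hB⟩ : ∃ B, u.getLast? = some true → ValidFib B ∧
      fibVal (B ++ replicate (L + 1) false) = fibVal (u ++ replicate L false) + fib (L + 1) := by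
    by_cases hlast : u.getLast? = some true
    · obtain ⟨B, hB, hBval⟩ := exists_carry u hu hlast
      exact ⟨B, fun _ => ⟨hB, hBval L⟩⟩
    · exact ⟨[], fun h => absurd h hlast⟩
  have hrℓ : r < fib (ℓ + 2) := hr.trans_le (fib_mono (by omega))
  refine ⟨(e, decide (u.getLast? = some true), ⟨r, hrℓ⟩, u.foldl M.step M.start,
    B.foldl M.step M.start), fun j => ?_⟩
  have hjL : (j : ℕ) < fib L := j.isLt.trans_le (hn.trans (fib_mono (by omega)))
  have hL2 : fib (L + 2) = fib L + fib (L + 1) := fib_add_two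
  simp only [windowDecoder, decide_eq_true_eq, ← hL]
  split_ifs with hcarry
  · obtain ⟨hB, hBval⟩ := hB hcarry.1
    have hL3 : fib (L + 3) = fib (L + 1) + fib (L + 2) := fib_add_two
    rw [show fibVal (u ++ replicate L false) + r + j =
        fibVal (B ++ replicate (L + 1) false) + (r + j - fib (L + 1)) by omega,
      apply_fibVal_append_replicate_add hM hB (by show _ < fib (L + 3); omega)
        (fun _ => by show _ < fib (L + 2); omega)]
  · rw [add_assoc, apply_fibVal_append_replicate_add hM hu (by omega)
      (fun hlast => by by_contra h; exact hcarry ⟨hlast, by omega⟩)]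

end Window

theorem subword_complexity_bound :
    ∃ C : ℕ, ∀ (Δ : Type) (_ : Fintype Δ) (m : ℕ), 1 ≤ m →
      ∀ x : ℕ → Δ, FibGeneratedBy x m →
        ∀ n : ℕ, 1 ≤ n →
          Set.ncard {f : Fin n → Δ | ∃ i : ℕ, ∀ j : Fin n, f j = x (i + (j : ℕ))} ≤
            C * n * m ^ 2 := by
  refine ⟨20, fun Δ _ m _ x ⟨σ, _, M, hcard, hM⟩ n hn => ?_⟩
  obtain ⟨ℓ, hnℓ, hℓ⟩ := exists_le_fib_and_fib_add_two_le hn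
  calc _ ≤ Fintype.card (Fin 2 × Bool × Fin (fib (ℓ + 2)) × σ × σ) :=
        ncard_factors_le_card x n _ (exists_windowDecoder_eq hM hnℓ)
    _ = 4 * fib (ℓ + 2) * Fintype.card σ ^ 2 := by simp [Fintype.card_prod]; ring
    _ ≤ 4 * (5 * n) * m ^ 2 := by gcongr
    _ = 20 * n * m ^ 2 := by ring
end

section
/- Let c ≥ 0 be an integer, let x and y be binary words of the same length, and let a, b ∈ {0,1} be such that xa and yb are valid Fibonacci representations. If [y] ≥ [x] + c + 1, then [yb] ≥ [xa] + c + 1. (Hence, once the difference [y] − [x] exceeds c, it exceeds c for every valid right extension.) -/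
def bitVal (a : Bool) : ℤ := if a then 1 else 0

/-- Value with weights one Fibonacci index lower. -/
def fibValLow : List Bool → ℕ
  | [] => 0
  | a :: rest => (if a then Nat.fib (rest.length + 1) else 0) + fibValLow rest

lemma fibVal_append_s19 (w : List Bool) (e : Bool) :
    fibVal (w ++ [e]) = fibVal w + fibValLow w + (if e then 1 else 0) := by
  induction w with
  | nil => cases e <;> simp [fibVal, fibValLow]
  | cons a r ih =>
      have hfib : Nat.fib (r.length + 3) = Nat.fib (r.length + 1) + Nat.fib (r.length + 2) :=
        Nat.fib_add_two
      have hfib2 : Nat.fib (r.length + 1 + 2) = Nat.fib (r.length + 3) := rfl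
      cases a <;> simp [fibVal, fibValLow, ih, Nat.succ_eq_add_one] <;> omega

lemma validFib_tail {a : Bool} {r : List Bool} (h : ValidFib (a :: r)) : ValidFib r :=
  (List.isChain_cons.mp h).2

lemma validFib_prefix {w : List Bool} {e : Bool} (h : ValidFib (w ++ [e])) : ValidFib w :=
  ((List.isChain_append.mp h).1)

lemma fibVal_bound : ∀ w : List Bool, ValidFib w →
    fibVal w < Nat.fib (w.length + 2) ∧
      (w.head? ≠ some true → fibVal w < Nat.fib (w.length + 1)) := by
  intro w
  induction w with
  | nil => intro _; simp [fibVal]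
  | cons a r ih =>
      intro hv
      have hr := ih (validFib_tail hv)
      have hmono : Nat.fib (r.length + 2) ≤ Nat.fib (r.length + 3) := Nat.fib_mono (by omega)
      have hfib : Nat.fib (r.length + 3) = Nat.fib (r.length + 1) + Nat.fib (r.length + 2) :=
        Nat.fib_add_two
      cases a with
      | false => simp [fibVal, add_assoc]; omega
      | true =>
          have hhead : r.head? ≠ some true := by
            cases r with
            | nil => simp
            | cons b r' =>
                have := (List.isChain_cons_cons.mp hv).1
                simp_all
          have h2 := hr.2 hhead
          simp [fibVal, add_assoc]
          omega

lemma fibValLow_bound : ∀ w : List Bool, ValidFib w →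
    fibValLow w ≤ Nat.fib (w.length + 1) ∧
      (w.head? ≠ some true → fibValLow w ≤ Nat.fib w.length) := by
  intro w
  induction w with
  | nil => intro _; simp [fibValLow]
  | cons a r ih =>
      intro hv
      have hr := ih (validFib_tail hv)
      have hmono : Nat.fib (r.length + 1) ≤ Nat.fib (r.length + 2) := Nat.fib_mono (by omega)
      have hfib : Nat.fib (r.length + 2) = Nat.fib r.length + Nat.fib (r.length + 1) :=
        Nat.fib_add_two
      cases a with
      | false => simp [fibValLow, add_assoc]; omega
      | true =>
          have hhead : r.head? ≠ some true := by
            cases r with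
            | nil => simp
            | cons b r' =>
                have := (List.isChain_cons_cons.mp hv).1
                simp_all
          have h2 := hr.2 hhead
          simp [fibValLow, add_assoc]
          omega

lemma fibValLow_strict_bound : ∀ w : List Bool, ValidFib (w ++ [true]) →
    fibValLow w < Nat.fib (w.length + 1) ∧
      (w.head? = some false → fibValLow w < Nat.fib w.length) := by
  intro w
  induction w with
  | nil => intro _; simp [fibValLow]
  | cons a r ih =>
      intro hv
      have hv' : ValidFib (r ++ [true]) := validFib_tail hv
      have hr := ih hv'
      have hmono : Nat.fib (r.length + 1) ≤ Nat.fib (r.length + 2) := Nat.fib_mono (by omega)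
      have hfib : Nat.fib (r.length + 2) = Nat.fib r.length + Nat.fib (r.length + 1) :=
        Nat.fib_add_two
      cases a with
      | false =>
          cases r with
          | nil => simp [fibValLow]
          | cons b r' =>
              simp [fibValLow]
              refine ⟨lt_of_lt_of_le hr.1 hmono, hr.1⟩
      | true =>
          cases r with
          | nil =>
              exfalso
              have := (List.isChain_cons_cons.mp hv).1
              simp at this
          | cons b r' =>
              have hb : b = false := by
                have := (List.isChain_cons_cons.mp hv).1
                simpa using this
              subst hb
              have h2 := hr.2 (by simp)
              simp [fibValLow, add_assoc] at h2 hfib hmono ⊢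
              omega

lemma fibValLow_mono : ∀ x y : List Bool, x.length = y.length →
    ValidFib x → ValidFib y → fibVal x < fibVal y → fibValLow x ≤ fibValLow y := by
  intro x
  induction x with
  | nil =>
      intro y hlen _ _ hlt
      cases y with
      | nil => simp [fibVal] at hlt
      | cons b y' => simp at hlen
  | cons a x' ih =>
      intro y hlen hvx hvy hlt
      cases y with
      | nil => simp at hlen
      | cons b y' =>
          have hl : x'.length = y'.length := by simpa using hlen
          cases a <;> cases b <;> simp [fibVal, hl] at hlt <;> simp [fibValLow, hl]
          · exact ih y' hl (validFib_tail hvx) (validFib_tail hvy) hlt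
          · have := (fibValLow_bound x' (validFib_tail hvx)).1
            rw [hl] at this
            omega
          · exfalso
            have := (fibVal_bound y' (validFib_tail hvy)).1
            omega
          · have := ih y' hl (validFib_tail hvx) (validFib_tail hvy) (by omega)
            omega

lemma fibValLow_strict_mono : ∀ x y : List Bool, x.length = y.length →
    ValidFib (x ++ [true]) → ValidFib y → fibVal x < fibVal y →
    fibValLow x < fibValLow y := by
  intro x
  induction x with
  | nil =>
      intro y hlen _ _ hlt
      cases y with
      | nil => simp [fibVal] at hlt
      | cons b y' => simp at hlen
  | cons a x' ih =>
      intro y hlen hvx hvy hlt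
      cases y with
      | nil => simp at hlen
      | cons b y' =>
          have hl : x'.length = y'.length := by simpa using hlen
          have hvx' : ValidFib (x' ++ [true]) := validFib_tail hvx
          cases a <;> cases b <;> simp [fibVal, hl] at hlt <;> simp [fibValLow, hl]
          · exact ih y' hl hvx' (validFib_tail hvy) hlt
          · have := (fibValLow_strict_bound x' hvx').1
            rw [hl] at this
            omega
          · exfalso
            have := (fibVal_bound y' (validFib_tail hvy)).1
            omega
          · have := ih y' hl hvx' (validFib_tail hvy) (by omega)
            omega

theorem diff_exceeds_c_stays (c : ℕ) (x y : List Bool) (hlen : x.length = y.length)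
    (a b : Bool) (hxa : ValidFib (x ++ [a])) (hyb : ValidFib (y ++ [b]))
    (h : fibVal y ≥ fibVal x + c + 1) :
    fibVal (y ++ [b]) ≥ fibVal (x ++ [a]) + c + 1 := by
  have hvx : ValidFib x := validFib_prefix hxa
  have hvy : ValidFib y := validFib_prefix hyb
  have hlt : fibVal x < fibVal y := by omega
  rw [fibVal_append_s19, fibVal_append_s19]
  cases a <;> cases b <;> simp only [if_pos, if_neg, Bool.false_eq_true, ite_true, ite_false,
    if_true, if_false]
  · have := fibValLow_mono x y hlen hvx hvy hlt
    omega
  · have := fibValLow_mono x y hlen hvx hvy hlt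
    omega
  · have := fibValLow_strict_mono x y hlen hxa hvy hlt
    omega
  · have := fibValLow_mono x y hlen hvx hvy hlt
    omega
end
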